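/- Let N ≥ 1, Δt > 0, and let a, b ∈ ℂ^N (extended by a_0 = a_{N+1} = b_0 = b_{N+1} = 0) satisfy the energy-preserving scheme: for each j = 1,…,N, b_j = a_j + Δt·( −i·((|a_j|² + |b_j|²)/2)·m_j + 2i \bar{m_j}·( (a_{j+1}² + b_{j+1}²)/2 + (a_{j−1}² + b_{j−1}²)/2 ) ), where m_j = (a_j + b_j)/2. Then the Hamiltonian is exactly conserved: Σ_{j=1}^N ( (1/4)|b_j|⁴ − Re(\bar{b_j}² b_{j−1}²) ) = Σ_{j=1}^N ( (1/4)|a_j|⁴ − Re(\bar{a_j}² a_{j−1}²) ). -/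
import Mathlib

open Complex Finset

set_option maxHeartbeats 1600000 in
private lemma energy_aux_alg (A B Am Bm Ap Bp : ℂ) :
    ((1/4 : ℝ) * (Complex.normSq B)^2 - ((starRingEnd ℂ) B ^2 * Bm^2).re)
      - ((1/4 : ℝ) * (Complex.normSq A)^2 - ((starRingEnd ℂ) A ^2 * Am^2).re)
    = ((starRingEnd ℂ) (B - A) *
        ((((Complex.normSq A + Complex.normSq B) / 2 : ℝ) : ℂ) * ((A + B)/2)
          - 2 * (starRingEnd ℂ) ((A+B)/2) *
            ((Ap^2 + Bp^2)/2 + (Am^2 + Bm^2)/2))).re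
      + (2 * (starRingEnd ℂ) ((Ap^2+Bp^2)/2) * (B - A) * ((A+B)/2)).re
      - (2 * (starRingEnd ℂ) ((A^2+B^2)/2) * (Bm - Am) * ((Am+Bm)/2)).re := by
  simp only [Complex.normSq_apply, pow_two, Complex.div_ofNat_re, Complex.div_ofNat_im,
    Complex.mul_re, Complex.mul_im,
    Complex.add_re, Complex.add_im, Complex.sub_re, Complex.sub_im,
    Complex.conj_re, Complex.conj_im, Complex.ofReal_re, Complex.ofReal_im,
    Complex.re_ofNat, Complex.im_ofNat]
  ring

/-- The energy-preserving scheme for the toy model system, with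
Dirichlet conventions, exactly conserves the Hamiltonian
`H[b] = ∑_{j=1}^N ( (1/4)|b_j|⁴ − Re( conj(b_j)² b_{j−1}² ) )`. -/
theorem energy_scheme_energy_conservation
    (N : ℕ) (hN : 1 ≤ N) (Δt : ℝ) (hΔt : 0 < Δt)
    (a b m : ℕ → ℂ)
    (ha0 : a 0 = 0) (haN : a (N + 1) = 0)
    (hb0 : b 0 = 0) (hbN : b (N + 1) = 0)
    (hm : ∀ j, m j = (a j + b j) / 2)
    (hscheme : ∀ j ∈ Finset.Icc 1 N,
      b j = a j + (Δt : ℂ) *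
        (-Complex.I * ((((Complex.normSq (a j) + Complex.normSq (b j)) / 2 : ℝ) : ℂ)) * m j
          + 2 * Complex.I * (starRingEnd ℂ) (m j) *
            (((a (j + 1)) ^ 2 + (b (j + 1)) ^ 2) / 2
              + ((a (j - 1)) ^ 2 + (b (j - 1)) ^ 2) / 2))) :
    (∑ j ∈ Finset.Icc 1 N, ((1 / 4 : ℝ) * (Complex.normSq (b j)) ^ 2
        - (((starRingEnd ℂ) (b j)) ^ 2 * (b (j - 1)) ^ 2).re))
      = ∑ j ∈ Finset.Icc 1 N, ((1 / 4 : ℝ) * (Complex.normSq (a j)) ^ 2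
        - (((starRingEnd ℂ) (a j)) ^ 2 * (a (j - 1)) ^ 2).re) := by
  -- the telescoping quantity
  set T : ℕ → ℝ := fun j =>
    (2 * (starRingEnd ℂ) ((a j ^ 2 + b j ^ 2)/2) * (b (j-1) - a (j-1))
      * ((a (j-1) + b (j-1))/2)).re with hT
  rw [← sub_eq_zero, ← Finset.sum_sub_distrib]
  have key : ∀ j ∈ Finset.Icc 1 N,
      (((1 / 4 : ℝ) * (Complex.normSq (b j)) ^ 2
          - (((starRingEnd ℂ) (b j)) ^ 2 * (b (j - 1)) ^ 2).re)
        - ((1 / 4 : ℝ) * (Complex.normSq (a j)) ^ 2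
          - (((starRingEnd ℂ) (a j)) ^ 2 * (a (j - 1)) ^ 2).re))
      = T (j+1) - T j := by
    intro j hj
    have hj1 : 1 ≤ j := (Finset.mem_Icc.mp hj).1
    -- the discrete gradient at step j
    set G : ℂ := (((Complex.normSq (a j) + Complex.normSq (b j)) / 2 : ℝ) : ℂ)
        * ((a j + b j)/2)
      - 2 * (starRingEnd ℂ) ((a j + b j)/2) *
        ((a (j+1)^2 + b (j+1)^2)/2 + (a (j-1)^2 + b (j-1)^2)/2) with hG
    have hAB := hscheme j hj
    rw [hm j] at hAB
    have hd : b j - a j = -(Complex.I * (Δt : ℂ)) * G := by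
      have h1 : b j - a j = (Δt : ℂ) *
        (-Complex.I * ((((Complex.normSq (a j) + Complex.normSq (b j)) / 2 : ℝ) : ℂ))
            * ((a j + b j)/2)
          + 2 * Complex.I * (starRingEnd ℂ) ((a j + b j)/2) *
            (((a (j + 1)) ^ 2 + (b (j + 1)) ^ 2) / 2
              + ((a (j - 1)) ^ 2 + (b (j - 1)) ^ 2) / 2)) :=
        sub_eq_iff_eq_add.mpr (hAB.trans (add_comm _ _))
      rw [h1, hG]; ring
    have hE : ((starRingEnd ℂ) (b j - a j) * G).re = 0 := by
      rw [hd]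
      have hc : (starRingEnd ℂ) (-(Complex.I * (Δt : ℂ)) * G) * G
          = Complex.I * (Δt : ℂ) * ((Complex.normSq G : ℝ) : ℂ) := by
        rw [Complex.normSq_eq_conj_mul_self]
        simp only [map_mul, map_neg, Complex.conj_I, Complex.conj_ofReal]
        ring
      rw [hc]
      simp [Complex.mul_re]
    have halg := energy_aux_alg (a j) (b j) (a (j-1)) (b (j-1)) (a (j+1)) (b (j+1))
    rw [← hG] at halg
    rw [halg, hE, zero_add]
    rfl
  rw [Finset.sum_congr rfl key]
  -- telescoping
  have htel : ∑ j ∈ Finset.Icc 1 N, (T (j+1) - T j) = T (N+1) - T 1 := by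
    rw [← Finset.Ico_add_one_right_eq_Icc, Finset.sum_Ico_eq_sum_range]
    have h := Finset.sum_range_sub (fun i => T (i+1)) N
    refine Eq.trans (Finset.sum_congr rfl fun i _ => ?_) h
    rw [add_comm 1 i]
  rw [htel]
  have hT1 : T 1 = 0 := by simp [hT, ha0, hb0]
  have hTN : T (N+1) = 0 := by simp [hT, haN, hbN]
  rw [hT1, hTN, sub_zero]
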